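/- Suppose L is twice continuously differentiable on [0,1] with L′(η) = ∫ π_η ℓ dμ for all η ∈ [0,1] (in particular ∫ π_η |ℓ| dμ < ∞ for all η). Then ∫₀¹ L″(η) dη = L′(1) − L′(0) = D_KL(p ‖ q₀) + D_KL(q₀ ‖ p), i.e., the integral over the annealing parameter of the second derivative of the log-normalizer equals the symmetrized Kullback–Leibler divergence between the initial distribution q₀ and the target distribution p. -/

import Mathlib

/-!
By the fundamental theorem of calculus, `∫₀¹ L″ = L′(1) − L′(0)`. At the endpoints the annealing
density is `π₀ = q₀` and, since `p` vanishes a.e. where `q₀` does, `π₁ = p` a.e.; hence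
`L′(1) = ∫ p log (p/q₀) = D_KL(p‖q₀)` and `L′(0) = ∫ q₀ log (p/q₀) = −D_KL(q₀‖p)`.
-/

open MeasureTheory Real Filter

noncomputable section

variable {X : Type*} [MeasurableSpace X]

/-- Geometric annealing path `γ_η = q₀^{1-η} p^η`, set to `0` where `q₀` vanishes. -/
def gammaPath (q0 p : X → ℝ) (η : ℝ) (z : X) : ℝ :=
  if q0 z = 0 then 0 else q0 z ^ (1 - η) * p z ^ η

/-- Normalization constant `Z_η = ∫ γ_η dμ` along the annealing path. -/
def Zpath (μ : Measure X) (q0 p : X → ℝ) (η : ℝ) : ℝ :=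
  ∫ z, gammaPath q0 p η z ∂μ

/-- Normalized annealing density `π_η = γ_η / Z_η`. -/
def piPath (μ : Measure X) (q0 p : X → ℝ) (η : ℝ) (z : X) : ℝ :=
  gammaPath q0 p η z / Zpath μ q0 p η

/-- Kullback–Leibler divergence `D_KL(a‖b) = ∫ a log(a/b) dμ` between densities. -/
def KLdiv (μ : Measure X) (a b : X → ℝ) : ℝ :=
  ∫ z, a z * Real.log (a z / b z) ∂μ


/-- `ℓ = log(p/q₀)`. -/
def ell (q0 p : X → ℝ) (z : X) : ℝ := Real.log (p z / q0 z)

theorem integral_eq_sub_of_hasDerivWithinAt_Icc {E : Type*} [NormedAddCommGroup E]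
    [NormedSpace ℝ E] [CompleteSpace E] {f f' : ℝ → E} {a b : ℝ} (hab : a ≤ b)
    (hderiv : ∀ x ∈ Set.Icc a b, HasDerivWithinAt f (f' x) (Set.Icc a b) x)
    (hcont : ContinuousOn f' (Set.Icc a b)) :
    ∫ x in a..b, f' x = f b - f a :=
  intervalIntegral.integral_eq_sub_of_hasDerivAt_of_le hab
    (fun x hx => (hderiv x hx).continuousWithinAt)
    (fun x hx => (hderiv x (Set.Ioo_subset_Icc_self hx)).hasDerivAt (Icc_mem_nhds hx.1 hx.2))
    (hcont.intervalIntegrable_of_Icc hab)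

theorem integral_mul_ell_eq_neg_KLdiv (μ : Measure X) (q0 p : X → ℝ) :
    ∫ z, q0 z * ell q0 p z ∂μ = -KLdiv μ q0 p := by
  rw [KLdiv, ← integral_neg]
  congr 1 with z
  rw [ell, ← inv_div, Real.log_inv, mul_neg]

theorem gammaPath_zero {Y : Type*} (q0 p : Y → ℝ) : gammaPath q0 p 0 = q0 := by
  funext z
  by_cases h : q0 z = 0 <;> simp [gammaPath, h]

section AnnealingPath

variable {μ : Measure X} {q0 p : X → ℝ}

theorem gammaPath_one_ae_eq (hpnn : ∀ z, 0 ≤ p z) (hsupp : ∀ᵐ z ∂μ, 0 < p z → 0 < q0 z) :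
    gammaPath q0 p 1 =ᵐ[μ] p := by
  filter_upwards [hsupp] with z hz
  by_cases h : q0 z = 0
  · have hp : p z = 0 := le_antisymm (not_lt.mp fun hpos => (hz hpos).ne' h) (hpnn z)
    simp [gammaPath, h, hp]
  · simp [gammaPath, h]

theorem integral_piPath_mul_ell_of_ae_eq {η : ℝ} {f : X → ℝ}
    (hγ : gammaPath q0 p η =ᵐ[μ] f) (hf : ∫ z, f z ∂μ = 1) :
    ∫ z, piPath μ q0 p η z * ell q0 p z ∂μ = ∫ z, f z * ell q0 p z ∂μ := by
  have hZ : Zpath μ q0 p η = 1 := (integral_congr_ae hγ).trans hf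
  refine integral_congr_ae ?_
  filter_upwards [hγ] with z hz
  rw [piPath, hZ, div_one, hz]

end AnnealingPath

theorem integral_second_derivative_eq_symmetrized_kl_general
    (μ : Measure X) (q0 p : X → ℝ)
    (hq0one : ∫ z, q0 z ∂μ = 1)
    (hpnn : ∀ z, 0 ≤ p z) (hpone : ∫ z, p z ∂μ = 1)
    (hsupp : ∀ᵐ z ∂μ, 0 < p z → 0 < q0 z)
    (L'' : ℝ → ℝ)
    (hL'' : ∀ η ∈ Set.Icc (0 : ℝ) 1,
      HasDerivWithinAt (fun t => ∫ z, piPath μ q0 p t z * ell q0 p z ∂μ)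
        (L'' η) (Set.Icc 0 1) η)
    (hL''cont : ContinuousOn L'' (Set.Icc 0 1)) :
    (∫ η in (0 : ℝ)..1, L'' η)
        = (∫ z, piPath μ q0 p 1 z * ell q0 p z ∂μ)
          - (∫ z, piPath μ q0 p 0 z * ell q0 p z ∂μ) ∧
    (∫ η in (0 : ℝ)..1, L'' η) = KLdiv μ p q0 + KLdiv μ q0 p := by
  have hftc := integral_eq_sub_of_hasDerivWithinAt_Icc zero_le_one hL'' hL''cont
  refine ⟨hftc, ?_⟩
  rw [hftc, integral_piPath_mul_ell_of_ae_eq (gammaPath_one_ae_eq hpnn hsupp) hpone,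
    integral_piPath_mul_ell_of_ae_eq (gammaPath_zero q0 p).eventuallyEq hq0one,
    integral_mul_ell_eq_neg_KLdiv]
  exact sub_neg_eq_add _ _

/-- If `L = log Z` is twice continuously differentiable on `[0,1]` with
`L′(η) = ∫ π_η ℓ dμ`, then `∫₀¹ L″(η) dη = L′(1) − L′(0) = D_KL(p‖q₀) + D_KL(q₀‖p)`. -/
theorem integral_second_derivative_eq_symmetrized_kl
    (μ : Measure X) [SigmaFinite μ] (q0 p : X → ℝ)
    (hq0m : Measurable q0) (hq0nn : ∀ z, 0 ≤ q0 z) (hq0one : ∫ z, q0 z ∂μ = 1)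
    (hpm : Measurable p) (hpnn : ∀ z, 0 ≤ p z) (hpone : ∫ z, p z ∂μ = 1)
    (hsupp : ∀ᵐ z ∂μ, 0 < p z → 0 < q0 z)
    (hZ : ∀ η ∈ Set.Icc (0 : ℝ) 1,
      Integrable (gammaPath q0 p η) μ ∧ 0 < Zpath μ q0 p η)
    (hπℓint : ∀ η ∈ Set.Icc (0 : ℝ) 1,
      Integrable (fun z => piPath μ q0 p η z * |ell q0 p z|) μ)
    (L'' : ℝ → ℝ)
    (hL' : ∀ η ∈ Set.Icc (0 : ℝ) 1,
      HasDerivWithinAt (fun t => Real.log (Zpath μ q0 p t))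
        (∫ z, piPath μ q0 p η z * ell q0 p z ∂μ) (Set.Icc 0 1) η)
    (hL'' : ∀ η ∈ Set.Icc (0 : ℝ) 1,
      HasDerivWithinAt (fun t => ∫ z, piPath μ q0 p t z * ell q0 p z ∂μ)
        (L'' η) (Set.Icc 0 1) η)
    (hL''cont : ContinuousOn L'' (Set.Icc 0 1)) :
    (∫ η in (0 : ℝ)..1, L'' η)
        = (∫ z, piPath μ q0 p 1 z * ell q0 p z ∂μ)
          - (∫ z, piPath μ q0 p 0 z * ell q0 p z ∂μ) ∧
    (∫ η in (0 : ℝ)..1, L'' η) = KLdiv μ p q0 + KLdiv μ q0 p :=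
  integral_second_derivative_eq_symmetrized_kl_general μ q0 p hq0one hpnn hpone hsupp L'' hL''
    hL''cont
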